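/- The conditional distribution of μ given X is Gaussian with the conjugate-update parameters: for almost every realization x of X, the conditional law of μ given X = x is N( (σ⁻²·x + ϱ0⁻¹·m0) / (σ⁻²·t + ϱ0⁻¹), 1/(σ⁻²·t + ϱ0⁻¹) ). -/

import Mathlib

/-!
The joint law of `(μ, X)` has the density `φ_{m0,ϱ0}(u) φ_{ut,σ²t}(x)` on `ℝ²`. Completing the
square in `u` rewrites this product as `φ_{m0 t, t²ϱ0+σ²t}(x) φ_{post(x)}(u)`, so the law of
`(X, μ)` is the Gaussian marginal of `X` composed with the Gaussian posterior kernel. Since the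
posterior kernel `κ†π` is determined by this disintegration, it agrees a.e. with
`condDistrib μ X P`.
-/

open MeasureTheory ProbabilityTheory
open scoped ENNReal NNReal

lemma MeasurableEquiv.map_withDensity {α β : Type*} [MeasurableSpace α] [MeasurableSpace β]
    (e : α ≃ᵐ β) (ρ : Measure α) (f : α → ℝ≥0∞) :
    (ρ.withDensity f).map e = (ρ.map e).withDensity (f ∘ e.symm) := by
  ext s hs
  rw [Measure.map_apply e.measurable hs, withDensity_apply _ (e.measurable hs),
    withDensity_apply _ hs, e.restrict_map, lintegral_map_equiv]
  simp

lemma MeasureTheory.Measure.map_swap_prod_withDensity {α β : Type*} [MeasurableSpace α]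
    [MeasurableSpace β] {μ : Measure α} {ν : Measure β} [SFinite μ] [SFinite ν]
    (f : α × β → ℝ≥0∞) :
    ((μ.prod ν).withDensity f).map Prod.swap = (ν.prod μ).withDensity (f ∘ Prod.swap) := by
  have h := MeasurableEquiv.map_withDensity MeasurableEquiv.prodComm (μ.prod ν) f
  rwa [MeasurableEquiv.prodComm, MeasurableEquiv.coe_mk, Equiv.coe_prodComm, Measure.prod_swap] at h

lemma MeasureTheory.Measure.withDensity_compProd_const_withDensity {α β : Type*}
    [MeasurableSpace α] [MeasurableSpace β] {μ : Measure α} {ν : Measure β} [SFinite μ]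
    [SFinite ν] {p : α → ℝ≥0∞} {q : α → β → ℝ≥0∞} (hp : Measurable p)
    (hq : Measurable (Function.uncurry q)) (hq_fin : ∀ x y, q x y ≠ ∞) :
    μ.withDensity p ⊗ₘ (Kernel.const α ν).withDensity q
      = (μ.prod ν).withDensity fun z => p z.1 * q z.1 z.2 := by
  have := Kernel.IsSFiniteKernel.withDensity (Kernel.const α ν) hq_fin
  rw [Measure.compProd_withDensity hq, Measure.compProd_const, prod_withDensity_left hp]
  exact (withDensity_mul _ (hp.comp measurable_fst) hq).symm

noncomputable def affineGaussianKernel (a b : ℝ) (v : ℝ≥0) : Kernel ℝ ℝ where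
  toFun x := gaussianReal (a * x + b) v
  measurable' :=
    measurable_gaussianReal.comp (by fun_prop : Measurable fun x : ℝ => (a * x + b, v))

@[simp] lemma affineGaussianKernel_apply (a b : ℝ) (v : ℝ≥0) (x : ℝ) :
    affineGaussianKernel a b v x = gaussianReal (a * x + b) v := rfl

instance (a b : ℝ) (v : ℝ≥0) : IsMarkovKernel (affineGaussianKernel a b v) :=
  ⟨fun x => by rw [affineGaussianKernel_apply]; infer_instance⟩

lemma affineGaussianKernel_eq_withDensity (a b : ℝ) {v : ℝ≥0} (hv : v ≠ 0) :
    affineGaussianKernel a b v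
      = (Kernel.const ℝ volume).withDensity fun x => gaussianPDF (a * x + b) v := by
  ext1 x
  rw [Kernel.withDensity_apply _ (by fun_prop), affineGaussianKernel_apply, Kernel.const_apply,
    gaussianReal_of_var_ne_zero _ hv]

lemma gaussianReal_compProd_affineGaussianKernel (m a b : ℝ) {v w : ℝ≥0} (hv : v ≠ 0)
    (hw : w ≠ 0) :
    gaussianReal m v ⊗ₘ affineGaussianKernel a b w = (volume.prod volume).withDensity
      fun z => gaussianPDF m v z.1 * gaussianPDF (a * z.1 + b) w z.2 := by
  rw [affineGaussianKernel_eq_withDensity _ _ hw, gaussianReal_of_var_ne_zero _ hv]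
  exact Measure.withDensity_compProd_const_withDensity (by fun_prop) (by fun_prop)
    fun _ _ => gaussianPDF_ne_top

section LinearGaussianModel

variable (m a : ℝ) {v w : ℝ}

lemma gaussianPDFReal_mul_gaussianPDFReal_linear (hv : 0 < v) (hw : 0 < w) (u x : ℝ) :
    gaussianPDFReal m v.toNNReal u * gaussianPDFReal (a * u) w.toNNReal x
      = gaussianPDFReal (a * m) (a ^ 2 * v + w).toNNReal x
        * gaussianPDFReal (a / w / (a ^ 2 / w + v⁻¹) * x + m / v / (a ^ 2 / w + v⁻¹))
            (a ^ 2 / w + v⁻¹)⁻¹.toNNReal u := by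
  have hτ : 0 < a ^ 2 / w + v⁻¹ := by positivity
  have hM : 0 < a ^ 2 * v + w := by positivity
  simp only [gaussianPDFReal, Real.coe_toNNReal _ hv.le, Real.coe_toNNReal _ hw.le,
    Real.coe_toNNReal _ hM.le, Real.coe_toNNReal _ (inv_pos.2 hτ).le]
  rw [mul_mul_mul_comm, mul_mul_mul_comm _ (Real.exp _), ← Real.exp_add, ← Real.exp_add,
    ← mul_inv, ← mul_inv, ← Real.sqrt_mul (by positivity), ← Real.sqrt_mul (by positivity)]
  congr 2
  · field_simp
  · field_simp
    ring

lemma map_swap_gaussianReal_compProd_affineGaussianKernel (hv : 0 < v) (hw : 0 < w) :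
    (gaussianReal m v.toNNReal ⊗ₘ affineGaussianKernel a 0 w.toNNReal).map Prod.swap
      = gaussianReal (a * m) (a ^ 2 * v + w).toNNReal
        ⊗ₘ affineGaussianKernel (a / w / (a ^ 2 / w + v⁻¹)) (m / v / (a ^ 2 / w + v⁻¹))
            (a ^ 2 / w + v⁻¹)⁻¹.toNNReal := by
  have hvar {r : ℝ} (hr : 0 < r) : r.toNNReal ≠ 0 := (Real.toNNReal_pos.2 hr).ne'
  rw [gaussianReal_compProd_affineGaussianKernel _ _ _ (hvar hv) (hvar hw),
    gaussianReal_compProd_affineGaussianKernel _ _ _ (hvar (by positivity)) (hvar (by positivity)),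
    Measure.map_swap_prod_withDensity]
  congr 1
  ext ⟨x, u⟩
  simp only [Function.comp_apply, Prod.swap_prod_mk, add_zero, gaussianPDF,
    ← ENNReal.ofReal_mul (gaussianPDFReal_nonneg _ _ _)]
  rw [gaussianPDFReal_mul_gaussianPDFReal_linear m a hv hw]

lemma affineGaussianKernel_comp_gaussianReal (hv : 0 < v) (hw : 0 < w) :
    affineGaussianKernel a 0 w.toNNReal ∘ₘ gaussianReal m v.toNNReal
      = gaussianReal (a * m) (a ^ 2 * v + w).toNNReal := by
  rw [← Measure.snd_compProd, ← Measure.fst_map_swap,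
    map_swap_gaussianReal_compProd_affineGaussianKernel m a hv hw, Measure.fst_compProd]

lemma posterior_affineGaussianKernel_ae_eq (hv : 0 < v) (hw : 0 < w) :
    (affineGaussianKernel a 0 w.toNNReal)†(gaussianReal m v.toNNReal)
      =ᵐ[gaussianReal (a * m) (a ^ 2 * v + w).toNNReal]
        affineGaussianKernel (a / w / (a ^ 2 / w + v⁻¹)) (m / v / (a ^ 2 / w + v⁻¹))
          (a ^ 2 / w + v⁻¹)⁻¹.toNNReal := by
  rw [← affineGaussianKernel_comp_gaussianReal m a hv hw]
  refine (ae_eq_posterior_of_compProd_eq ?_).symm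
  rw [affineGaussianKernel_comp_gaussianReal m a hv hw,
    map_swap_gaussianReal_compProd_affineGaussianKernel m a hv hw]

end LinearGaussianModel

lemma condDistrib_ae_eq_posterior {Ω α β : Type*} [MeasurableSpace Ω] [MeasurableSpace α]
    [StandardBorelSpace α] [Nonempty α] [MeasurableSpace β] {P : Measure Ω} [IsFiniteMeasure P]
    {Y : Ω → α} {X : Ω → β} (hY : Measurable Y) (hX : Measurable X) {π : Measure α}
    [IsFiniteMeasure π] {κ : Kernel α β} [IsFiniteKernel κ]
    (h : P.map (fun ω => (Y ω, X ω)) = π ⊗ₘ κ) :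
    condDistrib Y X P =ᵐ[P.map X] κ†π := by
  have hX_law : P.map X = κ ∘ₘ π := by
    rw [← Measure.snd_map_prodMk hY, h, Measure.snd_compProd]
  refine condDistrib_ae_eq_of_measure_eq_compProd X hY.aemeasurable ?_
  rw [hX_law, compProd_posterior_eq_map_swap, ← h, Measure.map_map measurable_swap (hY.prodMk hX)]
  rfl

theorem gaussian_conjugate_posterior_general
    {Ω : Type*} [MeasurableSpace Ω]
    (P : Measure Ω) [IsProbabilityMeasure P]
    (σ t m0 ϱ0 : ℝ) (hσ : 0 < σ) (ht : 0 < t) (hϱ0 : 0 < ϱ0)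
    (μ X : Ω → ℝ) (hμ : Measurable μ) (hX : Measurable X)
    (hprior : P.map μ = gaussianReal m0 ϱ0.toNNReal)
    (hlik : ∀ᵐ u ∂(P.map μ), condDistrib X μ P u = gaussianReal (u * t) (σ ^ 2 * t).toNNReal) :
    ∀ᵐ x ∂(P.map X), condDistrib μ X P x
      = gaussianReal (((σ ^ 2)⁻¹ * x + ϱ0⁻¹ * m0) / ((σ ^ 2)⁻¹ * t + ϱ0⁻¹))
          (1 / ((σ ^ 2)⁻¹ * t + ϱ0⁻¹)).toNNReal := by
  have hσ2t : 0 < σ ^ 2 * t := by positivity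
  have hlik' : condDistrib X μ P =ᵐ[P.map μ] affineGaussianKernel t 0 (σ ^ 2 * t).toNNReal := by
    filter_upwards [hlik] with u hu
    rw [hu, affineGaussianKernel_apply, add_zero, mul_comm]
  have hjoint := (condDistrib_ae_eq_iff_measure_eq_compProd μ hX.aemeasurable _).1 hlik'
  rw [hprior] at hjoint
  have hX_law : P.map X = gaussianReal (t * m0) (t ^ 2 * ϱ0 + σ ^ 2 * t).toNNReal := by
    rw [← Measure.snd_map_prodMk hμ, hjoint, Measure.snd_compProd,
      affineGaussianKernel_comp_gaussianReal m0 t hϱ0 hσ2t]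
  filter_upwards [condDistrib_ae_eq_posterior hμ hX hjoint,
    hX_law ▸ posterior_affineGaussianKernel_ae_eq m0 t hϱ0 hσ2t] with x hpost hgauss
  rw [hpost, hgauss, affineGaussianKernel_apply]
  congr 2
  · field_simp
  · field_simp

/-- Gaussian conjugate update. If `μ ∼ N(m0, ϱ0)` and, conditionally on `μ`,
`X ∼ N(μ·t, σ²·t)`, then the conditional law of `μ` given `X = x` is
`N((σ⁻²x + ϱ0⁻¹m0)/(σ⁻²t + ϱ0⁻¹), 1/(σ⁻²t + ϱ0⁻¹))` for a.e. `x` under the law of `X`. -/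
theorem gaussian_conjugate_posterior
    {Ω : Type*} [MeasurableSpace Ω] [StandardBorelSpace Ω] [Nonempty Ω]
    (P : Measure Ω) [IsProbabilityMeasure P]
    (σ t m0 ϱ0 : ℝ) (hσ : 0 < σ) (ht : 0 < t) (hϱ0 : 0 < ϱ0)
    (μ X : Ω → ℝ) (hμ : Measurable μ) (hX : Measurable X)
    (hprior : P.map μ = gaussianReal m0 ϱ0.toNNReal)
    (hlik : ∀ᵐ u ∂(P.map μ), condDistrib X μ P u = gaussianReal (u * t) (σ ^ 2 * t).toNNReal) :
    ∀ᵐ x ∂(P.map X), condDistrib μ X P x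
      = gaussianReal (((σ ^ 2)⁻¹ * x + ϱ0⁻¹ * m0) / ((σ ^ 2)⁻¹ * t + ϱ0⁻¹))
          (1 / ((σ ^ 2)⁻¹ * t + ϱ0⁻¹)).toNNReal :=
  gaussian_conjugate_posterior_general P σ t m0 ϱ0 hσ ht hϱ0 μ X hμ hX hprior hlik
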